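/- arXiv:1904.06738 — 4 statements merged into one kernel-verified Lean document; each statement's English description precedes it below -/
import Mathlib

section
/- Let A and P be real d×n matrices with σ = ‖A−P‖/√n, let M be a real d×k matrix with columns M_1,…,M_k, let K be the convex hull of {M_1,…,M_k}, and let δ ∈ (0,1/k] be such that δn is a positive integer. Assume every column P_{·,j} lies in K, and assume the Proximate Latent Points condition: for every ℓ ∈ [k] there exists S_ℓ ⊆ {1,…,n} with |S_ℓ| = δn such that |P_{·,j} − M_ℓ| ≤ 4σ/√δ for all j ∈ S_ℓ. Let K′ be the convex hull of the points A_R over all subsets R ⊆ {1,…,n} with |R| = δn, where A_R is the average of the columns of A indexed by R. Then the Hausdorff distance between K and K′ is at most 5σ/√δ. -/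
noncomputable def col {d k : ℕ} (M : Matrix (Fin d) (Fin k) ℝ) (ℓ : Fin k) :
    EuclideanSpace ℝ (Fin d) := WithLp.toLp 2 (fun i => M i ℓ)

noncomputable def specNorm {d n : ℕ} (B : Matrix (Fin d) (Fin n) ℝ) : ℝ :=
  ‖LinearMap.toContinuousLinearMap (Matrix.toEuclideanLin B)‖

noncomputable def colAvg {d n : ℕ} (A : Matrix (Fin d) (Fin n) ℝ) (S : Finset (Fin n)) :
    EuclideanSpace ℝ (Fin d) :=
  (S.card : ℝ)⁻¹ • ∑ j ∈ S, col A j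

/-!
Applying `A - P` to the unit-mass vector `1_R / |R|`, whose Euclidean norm is `|R|^(-1/2)`, gives
`A_R - P_R`, so `|A_R - P_R| ≤ ‖A - P‖ / √(δn) = σ / √δ` whenever `|R| = δn`. Hence each vertex
`M_ℓ` lies within `4σ/√δ + σ/√δ` of `A_{S_ℓ} ∈ K'`, and each generator `A_R` of `K'` lies within
`σ/√δ` of `P_R ∈ K`. Closed neighbourhoods of convex sets are convex, so these estimates on the
generators extend to the two convex hulls.
-/

open Metric in
theorem infDist_le_of_mem_convexHull {E : Type*} [NormedAddCommGroup E] [NormedSpace ℝ E]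
    {s t : Set E} {r : ℝ} (hr : 0 ≤ r) (ht : Convex ℝ t) (h : ∀ x ∈ s, ∃ y ∈ t, dist x y ≤ r)
    {x : E} (hx : x ∈ convexHull ℝ s) : infDist x t ≤ r := by
  have hs : s ⊆ cthickening r t := fun z hz => by
    obtain ⟨y, hy, hzy⟩ := h z hz
    exact mem_cthickening_of_dist_le z y r t hy hzy
  exact ENNReal.toReal_le_of_le_ofReal hr
    (mem_cthickening_iff.mp (convexHull_min hs (ht.cthickening r) hx))

open Metric in
theorem hausdorffDist_convexHull_le {E : Type*} [NormedAddCommGroup E] [NormedSpace ℝ E]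
    {s t : Set E} {r : ℝ} (hr : 0 ≤ r) (hst : ∀ x ∈ s, ∃ y ∈ convexHull ℝ t, dist x y ≤ r)
    (hts : ∀ y ∈ t, ∃ x ∈ convexHull ℝ s, dist y x ≤ r) :
    hausdorffDist (convexHull ℝ s) (convexHull ℝ t) ≤ r :=
  hausdorffDist_le_of_infDist hr
    (fun _ hx => infDist_le_of_mem_convexHull hr (convex_convexHull ℝ t) hst hx)
    (fun _ hy => infDist_le_of_mem_convexHull hr (convex_convexHull ℝ s) hts hy)

theorem toEuclideanLin_single {d n : ℕ} (B : Matrix (Fin d) (Fin n) ℝ) (j : Fin n) :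
    Matrix.toEuclideanLin B (EuclideanSpace.single j 1) = col B j := by
  ext i
  simp [Matrix.toLpLin_apply, col, Matrix.mulVec_single]

theorem EuclideanSpace.norm_sum_single_one {ι : Type*} [Fintype ι] [DecidableEq ι]
    (R : Finset ι) : ‖∑ j ∈ R, EuclideanSpace.single j (1 : ℝ)‖ = √R.card := by
  rw [EuclideanSpace.norm_eq]
  congr 1
  simp [WithLp.ofLp_sum, Finset.sum_apply, Pi.single_apply]

theorem colAvg_sub {d n : ℕ} (A P : Matrix (Fin d) (Fin n) ℝ) (R : Finset (Fin n)) :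
    colAvg A R - colAvg P R = colAvg (A - P) R := by
  simp only [colAvg, ← smul_sub, ← Finset.sum_sub_distrib]
  rfl

theorem norm_colAvg_le {d n : ℕ} (B : Matrix (Fin d) (Fin n) ℝ) (R : Finset (Fin n)) :
    ‖colAvg B R‖ ≤ specNorm B / √R.card := by
  set T := LinearMap.toContinuousLinearMap (Matrix.toEuclideanLin B)
  have hT : colAvg B R = T ((R.card : ℝ)⁻¹ • ∑ j ∈ R, EuclideanSpace.single j 1) := by
    simp [T, colAvg, toEuclideanLin_single]
  calc ‖colAvg B R‖ ≤ ‖T‖ * ‖(R.card : ℝ)⁻¹ • ∑ j ∈ R, EuclideanSpace.single j (1 : ℝ)‖ :=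
        hT ▸ T.le_opNorm _
    _ = specNorm B / √R.card := by
        rw [norm_smul, EuclideanSpace.norm_sum_single_one, norm_inv, RCLike.norm_natCast,
          inv_mul_eq_div, Real.sqrt_div_self', mul_one_div, specNorm]

theorem colAvg_eq_centerMass {d n : ℕ} (A : Matrix (Fin d) (Fin n) ℝ) (S : Finset (Fin n)) :
    colAvg A S = S.centerMass (fun _ => (1 : ℝ)) (col A) := by
  simp [colAvg, Finset.centerMass]

theorem colAvg_mem_of_convex {d n : ℕ} {A : Matrix (Fin d) (Fin n) ℝ} {S : Finset (Fin n)}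
    {s : Set (EuclideanSpace ℝ (Fin d))} (hs : Convex ℝ s) (hS : S.Nonempty)
    (h : ∀ j ∈ S, col A j ∈ s) : colAvg A S ∈ s := by
  rw [colAvg_eq_centerMass]
  exact hs.centerMass_mem (fun _ _ => zero_le_one) (by simpa using hS) h

theorem stmt2_general {d n k : ℕ}
    (A P : Matrix (Fin d) (Fin n) ℝ) (M : Matrix (Fin d) (Fin k) ℝ)
    (σ δ : ℝ) (hσ : σ = specNorm (A - P) / Real.sqrt n)
    (hδ0 : 0 < δ)
    (m : ℕ) (hm0 : 0 < m) (hm : (m : ℝ) = δ * n)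
    (K : Set (EuclideanSpace ℝ (Fin d)))
    (hK : K = convexHull ℝ (Set.range (col M)))
    (hPK : ∀ j : Fin n, col P j ∈ K)
    (hProx : ∀ ℓ : Fin k, ∃ S : Finset (Fin n), S.card = m ∧
      ∀ j ∈ S, ‖col P j - col M ℓ‖ ≤ 4 * σ / Real.sqrt δ)
    (K' : Set (EuclideanSpace ℝ (Fin d)))
    (hK' : K' = convexHull ℝ {x | ∃ R : Finset (Fin n), R.card = m ∧ x = colAvg A R}) :
    Metric.hausdorffDist K K' ≤ 5 * σ / Real.sqrt δ := by
  have hσ0 : 0 ≤ σ := hσ ▸ div_nonneg (norm_nonneg _) (Real.sqrt_nonneg _)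
  have hAP (R : Finset (Fin n)) (hR : R.card = m) : dist (colAvg A R) (colAvg P R) ≤ σ / √δ := by
    have hsqrt : √(R.card : ℝ) = √δ * √n := by rw [hR, hm, Real.sqrt_mul hδ0.le]
    calc dist (colAvg A R) (colAvg P R) ≤ specNorm (A - P) / √R.card := by
          rw [dist_eq_norm, colAvg_sub]; exact norm_colAvg_le _ R
      _ = σ / √δ := by rw [hsqrt, hσ, div_div, mul_comm]
  have hne (R : Finset (Fin n)) (hR : R.card = m) : R.Nonempty := Finset.card_pos.mp (hR ▸ hm0)
  subst hK hK'
  refine hausdorffDist_convexHull_le (by positivity) ?_ ?_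
  · rintro _ ⟨ℓ, rfl⟩
    obtain ⟨S, hS, hSM⟩ := hProx ℓ
    have hPM : dist (colAvg P S) (col M ℓ) ≤ 4 * σ / √δ :=
      colAvg_mem_of_convex (convex_closedBall _ _) (hne S hS)
        (fun j hj => mem_closedBall_iff_norm.mpr (hSM j hj))
    refine ⟨colAvg A S, subset_convexHull ℝ _ ⟨S, hS, rfl⟩, ?_⟩
    calc dist (col M ℓ) (colAvg A S)
        ≤ dist (colAvg A S) (colAvg P S) + dist (colAvg P S) (col M ℓ) := by
          rw [dist_comm]; exact dist_triangle _ _ _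
      _ ≤ σ / √δ + 4 * σ / √δ := add_le_add (hAP S hS) hPM
      _ = 5 * σ / √δ := by ring
  · rintro _ ⟨R, hR, rfl⟩
    refine ⟨colAvg P R, colAvg_mem_of_convex (convex_convexHull ℝ _) (hne R hR) fun j _ => hPK j, ?_⟩
    calc dist (colAvg A R) (colAvg P R) ≤ σ / √δ := hAP R hR
      _ ≤ 5 * σ / √δ := by gcongr; linarith

theorem stmt2 {d n k : ℕ} (hk : 1 ≤ k)
    (A P : Matrix (Fin d) (Fin n) ℝ) (M : Matrix (Fin d) (Fin k) ℝ)
    (σ δ : ℝ) (hσ : σ = specNorm (A - P) / Real.sqrt n)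
    (hδ0 : 0 < δ) (hδk : δ ≤ 1 / k)
    (m : ℕ) (hm0 : 0 < m) (hm : (m : ℝ) = δ * n)
    (K : Set (EuclideanSpace ℝ (Fin d)))
    (hK : K = convexHull ℝ (Set.range (col M)))
    (hPK : ∀ j : Fin n, col P j ∈ K)
    (hProx : ∀ ℓ : Fin k, ∃ S : Finset (Fin n), S.card = m ∧
      ∀ j ∈ S, ‖col P j - col M ℓ‖ ≤ 4 * σ / Real.sqrt δ)
    (K' : Set (EuclideanSpace ℝ (Fin d)))
    (hK' : K' = convexHull ℝ {x | ∃ R : Finset (Fin n), R.card = m ∧ x = colAvg A R}) :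
    Metric.hausdorffDist K K' ≤ 5 * σ / Real.sqrt δ :=
  stmt2_general A P M σ δ hσ hδ0 m hm0 hm K hK hPK hProx K' hK'
end

section
/- Let A and P be real d×n matrices, let k ≥ 1, suppose P has rank at most k, and suppose s_k(A) > 0, where s_t(A) denotes the t-th largest singular value of A. Let v_1,…,v_k be orthonormal vectors in ℝ^d with A·Aᵀ·v_t = s_t(A)²·v_t for t = 1,…,k (top k left singular vectors of A). Then sinΘ(span{v_1,…,v_k}, columnspace(P)) ≤ ‖A−P‖/s_k(A), where ‖·‖ is the spectral norm. -/
/-!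
Write a unit vector of `span {v_t}` as `u = ∑ c_t v_t`. As `A Aᵀ v_t = s_t(A)² v_t` with
`s_t(A) ≥ s_k(A)`, the vector `w = Aᵀ ∑ (c_t / s_t(A)²) v_t` satisfies `A w = u` and
`‖w‖² = ⟪∑ (c_t / s_t(A)²) v_t, u⟫ = ∑ c_t² / s_t(A)² ≤ 1 / s_k(A)²`. Then `P w` lies in the
column space of `P` and `‖u - P w‖ = ‖(A - P) w‖ ≤ ‖A - P‖ / s_k(A)`.
-/

open Matrix

/-- The `t`-th largest singular value (1-indexed), via the Courant–Fischer
characterization. -/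
noncomputable def singularValue {d n : ℕ} (B : Matrix (Fin d) (Fin n) ℝ) (t : ℕ) : ℝ :=
  ⨆ V : {V : Submodule ℝ (EuclideanSpace ℝ (Fin n)) // Module.finrank ℝ V = t},
    ⨅ x : {x : EuclideanSpace ℝ (Fin n) // x ∈ V.1 ∧ ‖x‖ = 1},
      ‖Matrix.toEuclideanLin B x.1‖

noncomputable def sinTheta {d : ℕ}
    (F F' : Submodule ℝ (EuclideanSpace ℝ (Fin d))) : ℝ :=
  ⨆ u : {u : EuclideanSpace ℝ (Fin d) // u ∈ F ∧ ‖u‖ = 1},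
    ⨅ v : {v : EuclideanSpace ℝ (Fin d) // v ∈ F'}, ‖u.1 - v.1‖

lemma Submodule.exists_le_finrank_eq {K E : Type*} [Field K] [AddCommGroup E] [Module K E]
    (V : Submodule K E) {j : ℕ} (hj : j ≤ Module.finrank K V) :
    ∃ W ≤ V, Module.finrank K W = j := by
  obtain ⟨f, hf⟩ := exists_linearIndependent_of_le_finrank hj
  refine ⟨Submodule.span K (Set.range (V.subtype ∘ f)), ?_, ?_⟩
  · rw [Submodule.span_le]
    rintro _ ⟨i, rfl⟩
    exact (f i).2
  · rw [finrank_span_eq_card (hf.map' V.subtype V.ker_subtype), Fintype.card_fin]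

lemma bddBelow_range_norm {ι E : Type*} [SeminormedAddGroup E] (f : ι → E) :
    BddBelow (Set.range fun i => ‖f i‖) :=
  ⟨0, by rintro - ⟨_, rfl⟩; positivity⟩

open Submodule in
lemma LinearMap.exists_apply_eq_norm_le_div_of_mem_span_eigenvectors {ι E F : Type*} [Fintype ι]
    [NormedAddCommGroup E] [InnerProductSpace ℝ E] [FiniteDimensional ℝ E]
    [NormedAddCommGroup F] [InnerProductSpace ℝ F] [FiniteDimensional ℝ F]
    (L : E →ₗ[ℝ] F) {v : ι → F} (hv : Orthonormal ℝ v) {s : ι → ℝ} {σ : ℝ} (hσ : 0 < σ)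
    (hσs : ∀ i, σ ≤ s i) (heig : ∀ i, L (L.adjoint (v i)) = s i ^ 2 • v i)
    {u : F} (hu : u ∈ span ℝ (Set.range v)) :
    ∃ w, L w = u ∧ ‖w‖ ≤ ‖u‖ / σ := by
  obtain ⟨c, rfl⟩ := (mem_span_range_iff_exists_fun ℝ).mp hu
  have hs : ∀ i, s i ^ 2 ≠ 0 := fun i => pow_ne_zero 2 (hσ.trans_le (hσs i)).ne'
  set z := ∑ i, (c i / s i ^ 2) • v i
  have hLz : L (L.adjoint z) = ∑ i, c i • v i := by
    simp only [z, map_sum, map_smul, heig, smul_smul, div_mul_cancel₀ _ (hs _)]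
  refine ⟨L.adjoint z, hLz, ?_⟩
  have hw : ‖L.adjoint z‖ ^ 2 = ∑ i, c i ^ 2 / s i ^ 2 := by
    rw [← real_inner_self_eq_norm_sq, LinearMap.adjoint_inner_left, hLz, hv.inner_sum]
    exact Finset.sum_congr rfl fun i _ => by simp only [conj_trivial]; ring
  have hu : ‖∑ i, c i • v i‖ ^ 2 = ∑ i, c i ^ 2 := by
    rw [← real_inner_self_eq_norm_sq, hv.inner_sum]
    simp only [conj_trivial, sq]
  rw [← pow_le_pow_iff_left₀ (norm_nonneg _) (by positivity) two_ne_zero, hw, div_pow, hu,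
    Finset.sum_div]
  exact Finset.sum_le_sum fun i _ =>
    div_le_div_of_nonneg_left (sq_nonneg _) (pow_pos hσ 2) (pow_le_pow_left₀ hσ.le (hσs i) 2)

section SingularValue

variable {d n : ℕ}

lemma specNorm_nonneg (B : Matrix (Fin d) (Fin n) ℝ) : 0 ≤ specNorm B :=
  norm_nonneg _

lemma norm_toEuclideanLin_apply_le (B : Matrix (Fin d) (Fin n) ℝ) (x : EuclideanSpace ℝ (Fin n)) :
    ‖toEuclideanLin B x‖ ≤ specNorm B * ‖x‖ :=
  (LinearMap.toContinuousLinearMap (toEuclideanLin B)).le_opNorm x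

noncomputable def minStretch (B : Matrix (Fin d) (Fin n) ℝ)
    (V : Submodule ℝ (EuclideanSpace ℝ (Fin n))) : ℝ :=
  ⨅ x : {x : EuclideanSpace ℝ (Fin n) // x ∈ V ∧ ‖x‖ = 1}, ‖toEuclideanLin B x.1‖

lemma minStretch_nonneg (B : Matrix (Fin d) (Fin n) ℝ)
    (V : Submodule ℝ (EuclideanSpace ℝ (Fin n))) : 0 ≤ minStretch B V :=
  Real.iInf_nonneg fun _ => norm_nonneg _

lemma singularValue_nonneg (B : Matrix (Fin d) (Fin n) ℝ) (t : ℕ) : 0 ≤ singularValue B t :=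
  Real.iSup_nonneg fun V => minStretch_nonneg B V.1

lemma minStretch_le_specNorm (B : Matrix (Fin d) (Fin n) ℝ)
    (V : Submodule ℝ (EuclideanSpace ℝ (Fin n))) : minStretch B V ≤ specNorm B := by
  rcases isEmpty_or_nonempty {x : EuclideanSpace ℝ (Fin n) // x ∈ V ∧ ‖x‖ = 1} with h | ⟨⟨x⟩⟩
  · rw [minStretch, Real.iInf_of_isEmpty]
    exact specNorm_nonneg B
  · refine (ciInf_le (bddBelow_range_norm _) x).trans ?_
    simpa [x.2.2] using norm_toEuclideanLin_apply_le B x.1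

lemma minStretch_le_singularValue (B : Matrix (Fin d) (Fin n) ℝ)
    {W : Submodule ℝ (EuclideanSpace ℝ (Fin n))} {t : ℕ} (hW : Module.finrank ℝ W = t) :
    minStretch B W ≤ singularValue B t :=
  le_ciSup (f := fun V : {V : Submodule ℝ (EuclideanSpace ℝ (Fin n)) //
      Module.finrank ℝ V = t} => minStretch B V.1)
    ⟨specNorm B, Set.forall_mem_range.2 fun V => minStretch_le_specNorm B V.1⟩ ⟨W, hW⟩

lemma minStretch_anti (B : Matrix (Fin d) (Fin n) ℝ)
    {V W : Submodule ℝ (EuclideanSpace ℝ (Fin n))} (hWV : W ≤ V) [Nontrivial W] :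
    minStretch B V ≤ minStretch B W := by
  obtain ⟨x, hx⟩ := exists_norm_eq W zero_le_one
  have : Nonempty {x : EuclideanSpace ℝ (Fin n) // x ∈ W ∧ ‖x‖ = 1} := ⟨⟨x, x.2, hx⟩⟩
  exact le_ciInf fun x => ciInf_le (bddBelow_range_norm fun x :
    {x : EuclideanSpace ℝ (Fin n) // x ∈ V ∧ ‖x‖ = 1} => toEuclideanLin B x.1)
    ⟨x.1, hWV x.2.1, x.2.2⟩

lemma singularValue_anti (B : Matrix (Fin d) (Fin n) ℝ) {j t : ℕ} (hj : 1 ≤ j) (hjt : j ≤ t) :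
    singularValue B t ≤ singularValue B j := by
  refine Real.iSup_le (fun V => ?_) (singularValue_nonneg B j)
  obtain ⟨W, hWV, hW⟩ := Submodule.exists_le_finrank_eq V.1 (V.2 ▸ hjt)
  have : Nontrivial W := Module.nontrivial_of_finrank_pos (hW ▸ hj)
  exact (minStretch_anti B hWV).trans (minStretch_le_singularValue B hW)

end SingularValue

lemma sinTheta_le_of_forall_exists {d : ℕ} {F F' : Submodule ℝ (EuclideanSpace ℝ (Fin d))}
    {c : ℝ} (hc : 0 ≤ c) (h : ∀ u ∈ F, ‖u‖ = 1 → ∃ v ∈ F', ‖u - v‖ ≤ c) :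
    sinTheta F F' ≤ c := by
  refine Real.iSup_le (fun u => ?_) hc
  obtain ⟨v, hv, huv⟩ := h u.1 u.2.1 u.2.2
  exact (ciInf_le (bddBelow_range_norm fun v : {v // v ∈ F'} => u.1 - v.1) ⟨v, hv⟩).trans huv

lemma toEuclideanLin_apply_mem_span_col {d n : ℕ} (P : Matrix (Fin d) (Fin n) ℝ)
    (w : EuclideanSpace ℝ (Fin n)) :
    toEuclideanLin P w ∈ Submodule.span ℝ (Set.range (_root_.col P)) := by
  have : toEuclideanLin P w = ∑ j, w j • _root_.col P j := by
    ext i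
    simp [_root_.col, Matrix.mulVec, dotProduct, mul_comm]
  rw [this]
  exact Submodule.sum_mem _ fun j _ => Submodule.smul_mem _ _ (Submodule.subset_span ⟨j, rfl⟩)

lemma toEuclideanLin_mul_transpose {d n : ℕ} (A : Matrix (Fin d) (Fin n) ℝ) :
    toEuclideanLin (A * Aᵀ) = toEuclideanLin A ∘ₗ (toEuclideanLin A).adjoint := by
  rw [← conjTranspose_eq_transpose_of_trivial, ← toEuclideanLin_conjTranspose_eq_adjoint]
  exact toLpLin_mul _ _ _ _ _

theorem stmt4_general {d n k : ℕ}
    (A P : Matrix (Fin d) (Fin n) ℝ)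
    (hs : 0 < singularValue A k)
    (v : Fin k → EuclideanSpace ℝ (Fin d))
    (hortho : Orthonormal ℝ v)
    (heig : ∀ t : Fin k,
      Matrix.toEuclideanLin (A * Aᵀ) (v t) = (singularValue A (t.1 + 1)) ^ 2 • v t) :
    sinTheta (Submodule.span ℝ (Set.range v))
        (Submodule.span ℝ (Set.range (col P)))
      ≤ specNorm (A - P) / singularValue A k := by
  refine sinTheta_le_of_forall_exists (div_nonneg (specNorm_nonneg _) hs.le) fun u hu hu1 => ?_
  obtain ⟨w, hAw, hw⟩ :=
    (toEuclideanLin A).exists_apply_eq_norm_le_div_of_mem_span_eigenvectors hortho hs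
      (fun t => singularValue_anti A (Nat.le_add_left 1 t) t.2)
      (fun t => by rw [← LinearMap.comp_apply, ← toEuclideanLin_mul_transpose, heig]) hu
  refine ⟨toEuclideanLin P w, toEuclideanLin_apply_mem_span_col P w, ?_⟩
  calc ‖u - toEuclideanLin P w‖ = ‖toEuclideanLin (A - P) w‖ := by
        rw [map_sub, LinearMap.sub_apply, hAw]
    _ ≤ specNorm (A - P) * ‖w‖ := norm_toEuclideanLin_apply_le _ w
    _ ≤ specNorm (A - P) * (1 / singularValue A k) := by
        gcongr
        · exact specNorm_nonneg _
        · rwa [hu1] at hw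
    _ = specNorm (A - P) / singularValue A k := mul_one_div _ _

theorem stmt4 {d n k : ℕ} (hk : 1 ≤ k)
    (A P : Matrix (Fin d) (Fin n) ℝ)
    (hrank : P.rank ≤ k)
    (hs : 0 < singularValue A k)
    (v : Fin k → EuclideanSpace ℝ (Fin d))
    (hortho : Orthonormal ℝ v)
    (heig : ∀ t : Fin k,
      Matrix.toEuclideanLin (A * Aᵀ) (v t) = (singularValue A (t.1 + 1)) ^ 2 • v t) :
    sinTheta (Submodule.span ℝ (Set.range v))
        (Submodule.span ℝ (Set.range (col P)))
      ≤ specNorm (A - P) / singularValue A k :=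
  stmt4_general A P hs v hortho heig
end

section
/- Let M be a real d×k matrix with columns M_1,…,M_k, let α ∈ (0,1), δ ∈ (0,1/k], σ ≥ 0, and k ≥ 1. Assume Well-Separatedness: for every ℓ, the orthogonal projection of M_ℓ onto the orthogonal complement of span{M_{ℓ'} : ℓ' ≠ ℓ} has norm at least α·max_{ℓ'}|M_{ℓ'}|. Assume Spectrally Bounded Perturbations: σ/√δ ≤ α³·min_ℓ|M_ℓ|/(4500·k⁹). Then for every x ∈ ℝ^k, |Mx| ≥ (1000·k^{8.5}/α²)·(σ/√δ)·|x|; i.e., the k-th (smallest) singular value of M satisfies s_k(M) ≥ 1000·k^{8.5}·σ/(α²·√δ). -/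
/-- Norm of the component of `x` orthogonal to the span of the columns `M ℓ'`, `ℓ' ≠ ℓ`. -/
noncomputable def projNullNorm {d k : ℕ} (M : Matrix (Fin d) (Fin k) ℝ) (ℓ : Fin k)
    (x : EuclideanSpace ℝ (Fin d)) : ℝ :=
  ‖(Submodule.orthogonalProjectionOnto ((Submodule.span ℝ {y | ∃ ℓ' : Fin k, ℓ' ≠ ℓ ∧ y = col M ℓ'})ᗮ) x :
      EuclideanSpace ℝ (Fin d))‖

theorem EuclideanSpace.norm_le_sqrt_card_mul {ι : Type*} [Fintype ι] {x : EuclideanSpace ℝ ι}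
    {m : ℝ} (hm : 0 ≤ m) (hx : ∀ i, |x i| ≤ m) : ‖x‖ ≤ √(Fintype.card ι) * m := by
  calc ‖x‖ = √(∑ i, |x i| ^ 2) := by simp [EuclideanSpace.norm_eq]
    _ ≤ √(∑ _i : ι, m ^ 2) := by gcongr with i; exact hx i
    _ = √(Fintype.card ι) * m := by simp [Real.sqrt_mul, hm]

theorem toEuclideanLin_eq_sum_smul_col {d k : ℕ} (M : Matrix (Fin d) (Fin k) ℝ)
    (x : EuclideanSpace ℝ (Fin k)) :
    Matrix.toEuclideanLin M x = ∑ ℓ, x ℓ • col M ℓ := by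
  ext i
  simp [Matrix.toLpLin_apply, Matrix.mulVec, dotProduct, col, mul_comm]

theorem projNullNorm_col_mul_abs_le {d k : ℕ} (M : Matrix (Fin d) (Fin k) ℝ) (ℓ : Fin k)
    (x : EuclideanSpace ℝ (Fin k)) :
    projNullNorm M ℓ (col M ℓ) * |x ℓ| ≤ ‖Matrix.toEuclideanLin M x‖ := by
  set K := (Submodule.span ℝ {y | ∃ ℓ' : Fin k, ℓ' ≠ ℓ ∧ y = col M ℓ'})ᗮ
  have hcol : ∀ ℓ' ≠ ℓ, K.orthogonalProjectionOnto (col M ℓ') = 0 := fun ℓ' hne =>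
    K.orthogonalProjectionOnto_apply_of_mem_orthogonal <|
      Submodule.le_orthogonal_orthogonal _ (Submodule.subset_span ⟨ℓ', hne, rfl⟩)
  have hproj : K.orthogonalProjectionOnto (Matrix.toEuclideanLin M x) =
      x ℓ • K.orthogonalProjectionOnto (col M ℓ) := by
    rw [toEuclideanLin_eq_sum_smul_col, map_sum, Finset.sum_eq_single ℓ]
    · exact map_smul _ _ _
    · intro ℓ' _ hne
      rw [map_smul, hcol ℓ' hne, smul_zero]
    · simp
  calc projNullNorm M ℓ (col M ℓ) * |x ℓ|
      = ‖K.orthogonalProjectionOnto (Matrix.toEuclideanLin M x)‖ := by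
        rw [hproj, norm_smul, Real.norm_eq_abs, mul_comm]; rfl
    _ ≤ ‖Matrix.toEuclideanLin M x‖ := K.norm_orthogonalProjectionOnto_apply_le _

theorem mul_norm_le_sqrt_mul_norm_toEuclideanLin {d k : ℕ} (M : Matrix (Fin d) (Fin k) ℝ)
    {c : ℝ} (hc : ∀ ℓ, c ≤ projNullNorm M ℓ (col M ℓ)) (x : EuclideanSpace ℝ (Fin k)) :
    c * ‖x‖ ≤ √k * ‖Matrix.toEuclideanLin M x‖ := by
  cases isEmpty_or_nonempty (Fin k)
  · simp [Subsingleton.elim x 0]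
  obtain ⟨ℓ, hℓ⟩ := Finite.exists_max fun ℓ => |x ℓ|
  have hx : ‖x‖ ≤ √k * |x ℓ| := by
    simpa using EuclideanSpace.norm_le_sqrt_card_mul (abs_nonneg _) hℓ
  have hp : 0 ≤ projNullNorm M ℓ (col M ℓ) := norm_nonneg _
  calc c * ‖x‖ ≤ projNullNorm M ℓ (col M ℓ) * (√k * |x ℓ|) :=
        mul_le_mul (hc ℓ) hx (norm_nonneg x) hp
    _ = √k * (projNullNorm M ℓ (col M ℓ) * |x ℓ|) := by ring
    _ ≤ √k * ‖Matrix.toEuclideanLin M x‖ := by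
        gcongr; exact projNullNorm_col_mul_abs_le M ℓ x

theorem Real.rpow_eight_point_five_mul_sqrt {x : ℝ} (hx : 0 ≤ x) :
    x ^ (8.5 : ℝ) * √x = x ^ 9 := by
  rw [Real.sqrt_eq_rpow, ← Real.rpow_add' hx (by norm_num), ← Real.rpow_natCast]
  norm_num

theorem stmt6_general {d k : ℕ} (hk : 1 ≤ k) (M : Matrix (Fin d) (Fin k) ℝ)
    (α δ σ : ℝ) (hα : α ∈ Set.Ioo (0:ℝ) 1)
    (hWS : ∀ ℓ : Fin k, α * (⨆ ℓ' : Fin k, ‖col M ℓ'‖) ≤ projNullNorm M ℓ (col M ℓ))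
    (hSB : σ / Real.sqrt δ ≤ α ^ 3 * (⨅ ℓ : Fin k, ‖col M ℓ‖) / (4500 * (k : ℝ) ^ 9)) :
    ∀ x : EuclideanSpace ℝ (Fin k),
      (1000 * (k : ℝ) ^ (8.5 : ℝ) / α ^ 2) * (σ / Real.sqrt δ) * ‖x‖
        ≤ ‖Matrix.toEuclideanLin M x‖ := by
  intro x
  have hk0 : (0 : ℝ) < k := by exact_mod_cast hk
  have : Nonempty (Fin k) := ⟨⟨0, hk⟩⟩
  set lo := ⨅ ℓ : Fin k, ‖col M ℓ‖
  set hi := ⨆ ℓ : Fin k, ‖col M ℓ‖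
  have hlo : 0 ≤ lo := le_ciInf fun ℓ => norm_nonneg _
  have hlohi : lo ≤ hi := ciInf_le_ciSup (Finite.bddBelow_range _) (Finite.bddAbove_range _)
  set C := 1000 * (k : ℝ) ^ (8.5 : ℝ) / α ^ 2
  have hC : C * (σ / √δ) * √k ≤ α * hi := calc
    C * (σ / √δ) * √k ≤ C * (α ^ 3 * lo / (4500 * (k : ℝ) ^ 9)) * √k := by gcongr
    _ = 1000 * ((k : ℝ) ^ (8.5 : ℝ) * √k) * α ^ 3 * lo / (4500 * α ^ 2 * (k : ℝ) ^ 9) := by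
      ring
    _ = 2 / 9 * α * lo := by
      rw [Real.rpow_eight_point_five_mul_sqrt hk0.le]
      field_simp [hα.1.ne']
      ring
    _ ≤ α * hi := by nlinarith [hα.1]
  refine le_of_mul_le_mul_left ?_ (Real.sqrt_pos.2 hk0)
  calc √k * (C * (σ / √δ) * ‖x‖) = C * (σ / √δ) * √k * ‖x‖ := by ring
    _ ≤ α * hi * ‖x‖ := by gcongr
    _ ≤ √k * ‖Matrix.toEuclideanLin M x‖ := mul_norm_le_sqrt_mul_norm_toEuclideanLin M hWS x

theorem stmt6 {d k : ℕ} (hk : 1 ≤ k) (M : Matrix (Fin d) (Fin k) ℝ)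
    (α δ σ : ℝ) (hα : α ∈ Set.Ioo (0:ℝ) 1) (hδ0 : 0 < δ) (hδk : δ ≤ 1 / k) (hσ : 0 ≤ σ)
    (hWS : ∀ ℓ : Fin k, α * (⨆ ℓ' : Fin k, ‖col M ℓ'‖) ≤ projNullNorm M ℓ (col M ℓ))
    (hSB : σ / Real.sqrt δ ≤ α ^ 3 * (⨅ ℓ : Fin k, ‖col M ℓ‖) / (4500 * (k : ℝ) ^ 9)) :
    ∀ x : EuclideanSpace ℝ (Fin k),
      (1000 * (k : ℝ) ^ (8.5 : ℝ) / α ^ 2) * (σ / Real.sqrt δ) * ‖x‖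
        ≤ ‖Matrix.toEuclideanLin M x‖ :=
  stmt6_general hk M α δ σ hα hWS hSB
end

section
/- Let k ≥ 2 be an integer and ζ ∈ [0,1]. Then the Beta(1/k, (k−1)/k) distribution puts mass at least ζ²/(3k) on [1−ζ, 1]; equivalently, ∫_{1−ζ}^{1} x^{1/k − 1}·(1−x)^{−1/k} dx ≥ (ζ²/(3k)) · ∫_{0}^{1} x^{1/k − 1}·(1−x)^{−1/k} dx. -/
open MeasureTheory intervalIntegral Set

theorem stmt15 (k : ℕ) (hk : 2 ≤ k) (ζ : ℝ) (hζ : ζ ∈ Set.Icc (0:ℝ) 1) :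
    (ζ ^ 2 / (3 * k)) *
        ∫ x in (0:ℝ)..1, x ^ ((1:ℝ) / k - 1) * (1 - x) ^ (-(1:ℝ) / k)
      ≤ ∫ x in (1 - ζ)..(1:ℝ), x ^ ((1:ℝ) / k - 1) * (1 - x) ^ (-(1:ℝ) / k) := by
  simp only [neg_div]
  set r : ℝ := (1:ℝ) / k with hrdef
  have hk2 : (2:ℝ) ≤ (k:ℝ) := by exact_mod_cast hk
  have hk0 : (0:ℝ) < (k:ℝ) := by linarith
  have hr0 : 0 < r := by positivity
  have hr2 : r ≤ 1/2 := by
    rw [hrdef]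
    rw [div_le_div_iff₀ hk0 (by norm_num)]
    linarith
  have hr1 : r < 1 := by linarith
  set f : ℝ → ℝ := fun x => x ^ (r - 1) * (1 - x) ^ (-r) with hfdef
  -- integrability on [0, 1/2]
  have hcont1 : ContinuousOn (fun x : ℝ => (1 - x) ^ (-r)) (Set.uIcc (0:ℝ) (1/2)) := by
    apply ContinuousOn.rpow_const (by fun_prop)
    intro x hx
    rw [Set.uIcc_of_le (by norm_num)] at hx
    left
    have := hx.2
    intro h; rw [sub_eq_zero] at h; norm_num [← h] at this
  have h_int1 : IntervalIntegrable f volume 0 (1/2) :=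
    (intervalIntegral.intervalIntegrable_rpow' (by linarith)).mul_continuousOn hcont1
  -- integrability on [1/2, 1]
  have h_base2 : IntervalIntegrable (fun x : ℝ => (1 - x) ^ (-r)) volume (1/2) 1 := by
    have h := (intervalIntegral.intervalIntegrable_rpow' (r := -r) (by linarith)
      (a := (1/2:ℝ)) (b := 0)).comp_sub_left 1
    norm_num at h
    exact h
  have hcont2 : ContinuousOn (fun x : ℝ => x ^ (r - 1)) (Set.uIcc (1/2:ℝ) 1) := by
    apply ContinuousOn.rpow_const (by fun_prop)
    intro x hx
    rw [Set.uIcc_of_le (by norm_num)] at hx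
    left
    have := hx.1
    intro h; rw [h] at this; norm_num at this
  have h_int2 : IntervalIntegrable f volume (1/2) 1 := h_base2.continuousOn_mul hcont2
  have h_int01 : IntervalIntegrable f volume 0 1 := h_int1.trans h_int2
  have h_intζ : IntervalIntegrable f volume (1 - ζ) 1 := by
    apply h_int01.mono_set
    apply Set.uIcc_subset_uIcc
    · rw [Set.uIcc_of_le (by norm_num)]
      constructor <;> [linarith [hζ.2]; linarith [hζ.1]]
    · rw [Set.uIcc_of_le (by norm_num)]
      norm_num
  -- tail lower bound: ζ ≤ ∫_{1-ζ}^1 f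
  have h_tail : ζ ≤ ∫ x in (1 - ζ)..1, f x := by
    have hae : (fun _ : ℝ => (1:ℝ)) ≤ᵐ[volume.restrict (Set.Icc (1 - ζ) 1)] f := by
      rw [Filter.EventuallyLE, MeasureTheory.ae_restrict_iff' measurableSet_Icc]
      have h0 : ∀ᵐ x : ℝ, x ≠ (0:ℝ) := by rw [MeasureTheory.ae_iff]; simp
      have h1 : ∀ᵐ x : ℝ, x ≠ (1:ℝ) := by rw [MeasureTheory.ae_iff]; simp
      filter_upwards [h0, h1] with x hx0 hx1 hxmem
      have hxl : 1 - ζ ≤ x := hxmem.1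
      have hxr : x ≤ 1 := hxmem.2
      have hx_pos : 0 < x := lt_of_le_of_ne (by linarith [hζ.2]) (Ne.symm hx0)
      have hx_lt : x < 1 := lt_of_le_of_ne hxr hx1
      have h1x : 0 < 1 - x := by linarith
      have ha : 1 ≤ x ^ (r - 1) :=
        Real.one_le_rpow_of_pos_of_le_one_of_nonpos hx_pos hxr (by linarith)
      have hb : 1 ≤ (1 - x) ^ (-r) :=
        Real.one_le_rpow_of_pos_of_le_one_of_nonpos h1x (by linarith) (by linarith)
      calc (1:ℝ) = 1 * 1 := by ring
        _ ≤ x ^ (r - 1) * (1 - x) ^ (-r) := by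
            apply mul_le_mul ha hb (by norm_num) (by positivity)
    have := intervalIntegral.integral_mono_ae_restrict (μ := volume)
      (f := fun _ : ℝ => (1:ℝ)) (g := f) (by linarith [hζ.1]) intervalIntegrable_const h_intζ hae
    simpa using this
  -- upper bound on [0, 1/2]
  have hhalf : ((1:ℝ)/2) ^ (-r) = 2 ^ r := by
    rw [one_div, Real.inv_rpow (by norm_num), ← Real.rpow_neg (by norm_num), neg_neg]
  have hA : ∫ x in (0:ℝ)..(1/2), f x ≤ (k:ℝ) := by
    have hle : ∫ x in (0:ℝ)..(1/2), f x ≤ ∫ x in (0:ℝ)..(1/2), 2 ^ r * x ^ (r - 1) := by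
      apply intervalIntegral.integral_mono_on (by norm_num) h_int1
        ((intervalIntegral.intervalIntegrable_rpow' (by linarith)).const_mul _)
      intro x hx
      have hx0 : 0 ≤ x := hx.1
      have hx2 : x ≤ 1/2 := hx.2
      have h1x : (1:ℝ)/2 ≤ 1 - x := by linarith
      have hb : (1 - x) ^ (-r) ≤ 2 ^ r := by
        rw [← hhalf]
        exact Real.rpow_le_rpow_of_nonpos (by norm_num) h1x (by linarith)
      calc x ^ (r - 1) * (1 - x) ^ (-r) ≤ x ^ (r - 1) * 2 ^ r :=
            mul_le_mul_of_nonneg_left hb (Real.rpow_nonneg hx0 _)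
        _ = 2 ^ r * x ^ (r - 1) := by ring
    have heq : ∫ x in (0:ℝ)..(1/2), 2 ^ r * x ^ (r - 1) = (k:ℝ) := by
      rw [intervalIntegral.integral_const_mul, integral_rpow (Or.inl (by linarith))]
      rw [sub_add_cancel, Real.zero_rpow hr0.ne']
      rw [sub_zero, ← mul_div_assoc, ← Real.mul_rpow (by norm_num) (by norm_num)]
      norm_num [Real.one_rpow]
      rw [hrdef]; field_simp
    linarith
  -- upper bound on [1/2, 1]
  have hB : ∫ x in (1/2:ℝ)..1, f x ≤ 4 := by
    have hpow2 : ((1:ℝ)/2) ^ (r - 1) ≤ 2 := by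
      rw [one_div, Real.inv_rpow (by norm_num), ← Real.rpow_neg (by norm_num)]
      calc (2:ℝ) ^ (-(r - 1)) ≤ 2 ^ (1:ℝ) :=
            Real.rpow_le_rpow_of_exponent_le (by norm_num) (by linarith)
        _ = 2 := Real.rpow_one 2
    have hle : ∫ x in (1/2:ℝ)..1, f x ≤ ∫ x in (1/2:ℝ)..1, 2 * (1 - x) ^ (-r) := by
      apply intervalIntegral.integral_mono_on (by norm_num) h_int2 (h_base2.const_mul _)
      intro x hx
      have hx1 : 1/2 ≤ x := hx.1
      have hx2 : x ≤ 1 := hx.2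
      have ha : x ^ (r - 1) ≤ 2 := by
        calc x ^ (r - 1) ≤ ((1:ℝ)/2) ^ (r - 1) :=
              Real.rpow_le_rpow_of_nonpos (by norm_num) hx1 (by linarith)
          _ ≤ 2 := hpow2
      exact mul_le_mul_of_nonneg_right ha (Real.rpow_nonneg (by linarith) _)
    have heq : ∫ x in (1/2:ℝ)..1, (1 - x) ^ (-r) = ∫ x in (0:ℝ)..(1/2), x ^ (-r) := by
      have := intervalIntegral.integral_comp_sub_left (a := (1/2:ℝ)) (b := 1)
        (fun u : ℝ => u ^ (-r)) 1
      norm_num at this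
      exact this
    have hval : ∫ x in (0:ℝ)..(1/2), x ^ (-r) ≤ 2 := by
      rw [integral_rpow (Or.inl (by linarith))]
      rw [Real.zero_rpow (by linarith), sub_zero]
      have hnum : ((1:ℝ)/2) ^ (-r + 1) ≤ 1 :=
        Real.rpow_le_one (by norm_num) (by norm_num) (by linarith)
      have hden : (1:ℝ)/2 ≤ -r + 1 := by linarith
      rw [div_le_iff₀ (by linarith)]
      nlinarith
    rw [intervalIntegral.integral_const_mul, heq] at hle
    linarith
  -- total
  have h_total : ∫ x in (0:ℝ)..1, f x ≤ 3 * (k:ℝ) := by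
    rw [← intervalIntegral.integral_add_adjacent_intervals h_int1 h_int2]
    linarith
  have hc : 0 ≤ ζ ^ 2 / (3 * (k:ℝ)) := by positivity
  calc ζ ^ 2 / (3 * (k:ℝ)) * ∫ x in (0:ℝ)..1, f x
      ≤ ζ ^ 2 / (3 * (k:ℝ)) * (3 * (k:ℝ)) := mul_le_mul_of_nonneg_left h_total hc
    _ = ζ ^ 2 := div_mul_cancel₀ _ (by positivity)
    _ ≤ ζ := by nlinarith [hζ.1, hζ.2]
    _ ≤ ∫ x in (1 - ζ)..1, f x := h_tail
end
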